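/- arXiv:2604.26432 — 4 statements merged into one kernel-verified Lean document; each statement's English description precedes it below -/
import Mathlib

section
/- Fix an integer m ≥ 3 and reals c > 0, λ > 0. For every integer n ≥ 3, the coefficient of x¹ in the polynomial γ_n equals −((n−2)/m)·c²·λ^{n−3}. -/
/-!
Only `θ_1` has a constant term and only `θ_3` has a term in `x`, so comparing coefficients of
`x⁰` and `x¹` in the recursion gives `γ_n(0) = λ^{n-1}` and the first-order recurrence
`b_{n+1} = λ b_n - (c²/m) λ^{n-2}` for `b_n = [x¹] γ_n`, starting from `b_3 = -c²/m`.
-/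

open Polynomial

/-- The polynomials `θ_n` in one variable `x` (representing `‖α‖²`):
`θ_1 = 1`, `θ_n = 0` for even `n`, and
`θ_{2k+1} = (-1)^k ((1/2)_k / (m/2)_k) c^{2k} x^k` for `k ≥ 1`. -/
noncomputable def thetaPoly (m : ℕ) (c : ℝ) : ℕ → Polynomial ℝ := fun n =>
  if n % 2 = 1 then
    C ((-1 : ℝ) ^ (n / 2) *
        ((ascPochhammer ℝ (n / 2)).eval ((1 : ℝ) / 2) /
          (ascPochhammer ℝ (n / 2)).eval ((m : ℝ) / 2)) * c ^ (2 * (n / 2))) *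
      X ^ (n / 2)
  else 0

lemma thetaPoly_coeff (m : ℕ) (c : ℝ) (k j : ℕ) :
    (thetaPoly m c k).coeff j = if k % 2 = 1 ∧ k / 2 = j then
      (-1 : ℝ) ^ j * ((ascPochhammer ℝ j).eval ((1 : ℝ) / 2) /
        (ascPochhammer ℝ j).eval ((m : ℝ) / 2)) * c ^ (2 * j) else 0 := by
  unfold thetaPoly
  by_cases hodd : k % 2 = 1
  · obtain rfl | hj := eq_or_ne (k / 2) j
    · simp only [hodd, and_self, if_true, coeff_C_mul_X_pow]
    · simp only [hodd, hj, and_false, if_true, if_false, coeff_C_mul_X_pow, Ne.symm hj]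
  · simp [hodd]

lemma thetaPoly_coeff_zero (m : ℕ) (c : ℝ) (k : ℕ) :
    (thetaPoly m c k).coeff 0 = if k = 1 then 1 else 0 := by
  have : k % 2 = 1 ∧ k / 2 = 0 ↔ k = 1 := by omega
  simp only [thetaPoly_coeff, this, mul_zero, pow_zero, ascPochhammer_zero, eval_one, div_one,
    mul_one]

lemma thetaPoly_coeff_one (m : ℕ) (c : ℝ) (k : ℕ) :
    (thetaPoly m c k).coeff 1 = if k = 3 then -(c ^ 2 / m) else 0 := by
  have : k % 2 = 1 ∧ k / 2 = 1 ↔ k = 3 := by omega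
  simp only [thetaPoly_coeff, this, ascPochhammer_one, eval_X]
  congr 1
  ring

def GammaRecursion (m : ℕ) (c lam : ℝ) (γ : ℕ → ℝ[X]) : Prop :=
  ∀ n, 2 ≤ n → γ n = thetaPoly m c n +
    C lam * ∑ k ∈ Finset.Icc 1 (n - 1), γ (n - k) * thetaPoly m c k

section Recurrence

variable {m : ℕ} {c lam : ℝ} {γ : ℕ → ℝ[X]}

lemma gamma_coeff_zero (hγ1 : γ 1 = 1) (hγ : GammaRecursion m c lam γ) (n : ℕ) :
    (γ (n + 1)).coeff 0 = lam ^ n := by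
  induction n with
  | zero => simp [hγ1]
  | succ n ih =>
    rw [hγ (n + 2) (by omega), coeff_add, coeff_C_mul, finsetSum_coeff]
    simp [mul_coeff_zero, thetaPoly_coeff_zero, ih, pow_succ, mul_comm]

lemma gamma_coeff_one (hγ : GammaRecursion m c lam γ) (n : ℕ) (hn : 2 ≤ n) :
    (γ n).coeff 1 = (if n = 3 then -(c ^ 2 / m) else 0) +
      lam * ((γ (n - 1)).coeff 1 - if 4 ≤ n then c ^ 2 / m * (γ (n - 3)).coeff 0 else 0) := by
  rw [hγ n hn, coeff_add, coeff_C_mul, finsetSum_coeff]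
  simp only [mul_coeff_one, thetaPoly_coeff_zero, thetaPoly_coeff_one, mul_ite, mul_one, mul_zero,
    Finset.sum_add_distrib, Finset.sum_ite_eq', Finset.mem_Icc]
  have h3 : 1 ≤ 3 ∧ 3 ≤ n - 1 ↔ 4 ≤ n := by omega
  simp only [h3, le_refl, true_and, show 1 ≤ n - 1 by omega, if_true]
  split_ifs <;> ring

lemma gamma_coeff_one_three (hγ1 : γ 1 = 1) (hγ : GammaRecursion m c lam γ) :
    (γ 3).coeff 1 = -(c ^ 2 / m) := by
  simp [gamma_coeff_one hγ, hγ1, coeff_one]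

lemma gamma_coeff_one_succ (hγ1 : γ 1 = 1) (hγ : GammaRecursion m c lam γ) (n : ℕ) (hn : 3 ≤ n) :
    (γ (n + 1)).coeff 1 = lam * (γ n).coeff 1 - c ^ 2 / m * lam ^ (n - 2) := by
  rw [gamma_coeff_one hγ (n + 1) (by omega), if_neg (by omega), if_pos (by omega),
    show n + 1 - 3 = n - 3 + 1 by omega, gamma_coeff_zero hγ1 hγ, Nat.add_sub_cancel,
    show n - 2 = n - 3 + 1 by omega, pow_succ]
  ring

end Recurrence

theorem coeff_x_one_gamma_general (m : ℕ) (c lam : ℝ)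
    (γ : ℕ → Polynomial ℝ) (hγ1 : γ 1 = 1)
    (hγ : ∀ n, 2 ≤ n → γ n = thetaPoly m c n +
      C lam * ∑ k ∈ Finset.Icc 1 (n - 1), γ (n - k) * thetaPoly m c k) :
    ∀ n, 3 ≤ n →
      (γ n).coeff 1 = -(((n : ℝ) - 2) / (m : ℝ)) * c ^ 2 * lam ^ (n - 3) := by
  intro n hn
  induction n, hn using Nat.le_induction with
  | base => rw [gamma_coeff_one_three hγ1 hγ]; ring
  | succ n hn ih =>
    rw [gamma_coeff_one_succ hγ1 hγ n hn, ih, show n + 1 - 3 = n - 3 + 1 by omega,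
      show n - 2 = n - 3 + 1 by omega]
    push_cast
    ring

/-- For any dimension `m ≥ 3`, speed `c > 0` and intensity `λ > 0`, and `γ` defined by
`γ_1 = 1`, `γ_n = θ_n + λ Σ_{k=1}^{n-1} γ_{n-k} θ_k` for `n ≥ 2`, the coefficient of `x` in
`γ_n` is `-((n-2)/m) c² λ^{n-3}` for every `n ≥ 3`. -/
theorem coeff_x_one_gamma (m : ℕ) (hm : 3 ≤ m) (c lam : ℝ) (hc : 0 < c) (hlam : 0 < lam)
    (γ : ℕ → Polynomial ℝ) (hγ1 : γ 1 = 1)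
    (hγ : ∀ n, 2 ≤ n → γ n = thetaPoly m c n +
      C lam * ∑ k ∈ Finset.Icc 1 (n - 1), γ (n - k) * thetaPoly m c k) :
    ∀ n, 3 ≤ n →
      (γ n).coeff 1 = -(((n : ℝ) - 2) / (m : ℝ)) * c ^ 2 * lam ^ (n - 3) :=
  coeff_x_one_gamma_general m c lam γ hγ1 hγ
end

section
/- Fix an integer m ≥ 3 and reals c > 0, λ > 0. For every integer n ≥ 5, the coefficient of x² in the polynomial γ_n equals (c⁴ · λ^{n−5} · (n−4) / (m² · (m+2))) · ( ((n+1)/2)·m + (n−5) ). -/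
open Polynomial

/-!
Since `θ_k` is a monomial of degree `i` exactly when `k = 2i + 1`, taking the coefficient of `x^j`
in the recursion gives `[x^j] γ_n = [x^j] θ_n + λ ∑_{i ≤ j, 2i+1 < n} [x^{j-i}] γ_{n-2i-1} · t_i`,
where `t_i` is the coefficient of `θ_{2i+1}`. Hence `γ_n` has degree below `n/2`, the top
coefficient `[x^j] γ_{2j+1}` is `t_j`, and for `n > 2j+1` the `j`-th coefficient is `λ` times a
convolution of lower ones. Solving these recursions for `j = 0, 1, 2` in turn gives
`λ^{n-1}`, `(n-2) λ^{n-3} t₁` and `λ^{n-5} ((n-4) t₂ + (n-4)(n-5)/2 · t₁²)`, and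
`t₁ = -c²/m`, `t₂ = 3c⁴/(m(m+2))`.
-/

open Finset

noncomputable def thetaCoeff (m : ℕ) (c : ℝ) (i : ℕ) : ℝ :=
  (-1) ^ i * ((ascPochhammer ℝ i).eval ((1 : ℝ) / 2) / (ascPochhammer ℝ i).eval ((m : ℝ) / 2)) *
    c ^ (2 * i)

theorem coeff_thetaPoly (m : ℕ) (c : ℝ) (k i : ℕ) :
    (thetaPoly m c k).coeff i = if k = 2 * i + 1 then thetaCoeff m c i else 0 := by
  unfold thetaPoly
  split_ifs with hk hki hki
  · rw [hki, show (2 * i + 1) / 2 = i by omega, coeff_C_mul_X_pow, if_pos rfl, thetaCoeff]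
  · rw [coeff_C_mul, coeff_X_pow, if_neg (by omega), mul_zero]
  · omega
  · rfl

theorem thetaCoeff_zero (m : ℕ) (c : ℝ) : thetaCoeff m c 0 = 1 := by
  simp [thetaCoeff]

theorem ascPochhammer_two_eval {S : Type*} [CommSemiring S] (x : S) :
    (ascPochhammer S 2).eval x = x * (x + 1) := by
  simp [ascPochhammer_succ_right]

theorem thetaCoeff_one (m : ℕ) (c : ℝ) : thetaCoeff m c 1 = -(c ^ 2 / m) := by
  rw [thetaCoeff, ascPochhammer_one, eval_X, eval_X, div_div_eq_mul_div]
  ring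

theorem thetaCoeff_two (m : ℕ) (c : ℝ) :
    thetaCoeff m c 2 = 3 * c ^ 4 / ((m : ℝ) * ((m : ℝ) + 2)) := by
  have hm : (m : ℝ) / 2 * ((m : ℝ) / 2 + 1) = m * (m + 2) / 4 := by ring
  rw [thetaCoeff, ascPochhammer_two_eval, ascPochhammer_two_eval, hm, div_div_eq_mul_div]
  ring

def IsGammaRecursion (m : ℕ) (c lam : ℝ) (γ : ℕ → ℝ[X]) : Prop :=
  ∀ n, 2 ≤ n → γ n = thetaPoly m c n + C lam * ∑ k ∈ Icc 1 (n - 1), γ (n - k) * thetaPoly m c k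

section IsGammaRecursion

variable {m : ℕ} {c lam : ℝ} {γ : ℕ → ℝ[X]}

theorem IsGammaRecursion.coeff (hγ : IsGammaRecursion m c lam γ) {n : ℕ} (hn : 2 ≤ n) (j : ℕ) :
    (γ n).coeff j = (thetaPoly m c n).coeff j + lam * ∑ p ∈ antidiagonal j,
      if 2 * p.2 + 1 < n then (γ (n - (2 * p.2 + 1))).coeff p.1 * thetaCoeff m c p.2 else 0 := by
  rw [hγ n hn, coeff_add, coeff_C_mul, finsetSum_coeff]
  simp_rw [coeff_mul]
  rw [sum_comm]
  congr 2
  refine sum_congr rfl fun p _ => ?_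
  simp only [coeff_thetaPoly, mul_ite, mul_zero, sum_ite_eq', mem_Icc]
  congr 1
  exact propext (by omega)

theorem IsGammaRecursion.coeff_eq_zero (hγ1 : γ 1 = 1) (hγ : IsGammaRecursion m c lam γ)
    {n j : ℕ} (hn : 1 ≤ n) (hnj : n ≤ 2 * j) : (γ n).coeff j = 0 := by
  induction n using Nat.strong_induction_on generalizing j with
  | _ n ih =>
    rcases hn.eq_or_lt with rfl | hn
    · rw [hγ1, coeff_one, if_neg (by omega)]
    rw [hγ.coeff hn, coeff_thetaPoly, if_neg (by omega), zero_add, mul_eq_zero]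
    refine .inr (sum_eq_zero fun p hp => ?_)
    rw [HasAntidiagonal.mem_antidiagonal] at hp
    split_ifs with hpn
    · rw [ih _ (by omega) (by omega) (by omega), zero_mul]
    · rfl

theorem IsGammaRecursion.coeff_two_mul_add_one (hγ1 : γ 1 = 1) (hγ : IsGammaRecursion m c lam γ)
    (j : ℕ) : (γ (2 * j + 1)).coeff j = thetaCoeff m c j := by
  rcases j.eq_zero_or_pos with rfl | hj
  · simp [hγ1, thetaCoeff_zero]
  rw [hγ.coeff (by omega), coeff_thetaPoly, if_pos rfl, add_eq_left, mul_eq_zero]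
  refine .inr (sum_eq_zero fun p hp => ?_)
  rw [HasAntidiagonal.mem_antidiagonal] at hp
  split_ifs with hpn
  · rw [hγ.coeff_eq_zero hγ1 (by omega) (by omega), zero_mul]
  · rfl

theorem IsGammaRecursion.coeff_of_lt (hγ : IsGammaRecursion m c lam γ) {n j : ℕ}
    (hjn : 2 * j + 1 < n) : (γ n).coeff j =
      lam * ∑ p ∈ antidiagonal j, (γ (n - (2 * p.2 + 1))).coeff p.1 * thetaCoeff m c p.2 := by
  rw [hγ.coeff (by omega), coeff_thetaPoly, if_neg (by omega), zero_add]
  congr 1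
  refine sum_congr rfl fun p hp => ?_
  rw [HasAntidiagonal.mem_antidiagonal] at hp
  rw [if_pos (by omega)]

theorem IsGammaRecursion.coeff_zero (hγ1 : γ 1 = 1) (hγ : IsGammaRecursion m c lam γ) {n : ℕ}
    (hn : 1 ≤ n) : (γ n).coeff 0 = lam ^ (n - 1) := by
  induction n, hn using Nat.le_induction with
  | base => simpa [thetaCoeff_zero] using hγ.coeff_two_mul_add_one hγ1 0
  | succ n hn ih =>
    rw [hγ.coeff_of_lt (by omega)]
    simp [ih, thetaCoeff_zero, ← pow_succ', Nat.sub_add_cancel hn]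

theorem IsGammaRecursion.coeff_one (hγ1 : γ 1 = 1) (hγ : IsGammaRecursion m c lam γ) {n : ℕ}
    (hn : 3 ≤ n) : (γ n).coeff 1 = ((n : ℝ) - 2) * lam ^ (n - 3) * thetaCoeff m c 1 := by
  induction n, hn using Nat.le_induction with
  | base => norm_num [hγ.coeff_two_mul_add_one hγ1 1]
  | succ n hn ih =>
    obtain ⟨k, rfl⟩ := Nat.exists_eq_add_of_le' hn
    have hrec : (γ (k + 4)).coeff 1 =
        lam * ((γ (k + 3)).coeff 1 + (γ (k + 1)).coeff 0 * thetaCoeff m c 1) := by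
      rw [hγ.coeff_of_lt (by omega)]
      simp [Finset.Nat.sum_antidiagonal_succ, thetaCoeff_zero, add_comm]
    rw [hrec, ih, hγ.coeff_zero hγ1 (by omega)]
    push_cast
    ring

theorem IsGammaRecursion.coeff_two (hγ1 : γ 1 = 1) (hγ : IsGammaRecursion m c lam γ) {n : ℕ}
    (hn : 5 ≤ n) : (γ n).coeff 2 = lam ^ (n - 5) * (((n : ℝ) - 4) * thetaCoeff m c 2 +
      ((n : ℝ) - 4) * ((n : ℝ) - 5) / 2 * thetaCoeff m c 1 ^ 2) := by
  induction n, hn using Nat.le_induction with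
  | base => norm_num [hγ.coeff_two_mul_add_one hγ1 2]
  | succ n hn ih =>
    obtain ⟨k, rfl⟩ := Nat.exists_eq_add_of_le' hn
    have hrec : (γ (k + 6)).coeff 2 = lam * ((γ (k + 5)).coeff 2 +
        (γ (k + 3)).coeff 1 * thetaCoeff m c 1 + (γ (k + 1)).coeff 0 * thetaCoeff m c 2) := by
      rw [hγ.coeff_of_lt (by omega)]
      simp [Finset.Nat.sum_antidiagonal_succ, thetaCoeff_zero, add_comm, add_left_comm]
    rw [hrec, ih, hγ.coeff_one hγ1 (by omega), hγ.coeff_zero hγ1 (by omega)]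
    push_cast
    ring

end IsGammaRecursion

theorem coeff_x_two_gamma_general (m : ℕ) (hm : 3 ≤ m) (c lam : ℝ)
    (γ : ℕ → Polynomial ℝ) (hγ1 : γ 1 = 1)
    (hγ : ∀ n, 2 ≤ n → γ n = thetaPoly m c n +
      C lam * ∑ k ∈ Finset.Icc 1 (n - 1), γ (n - k) * thetaPoly m c k) :
    ∀ n, 5 ≤ n →
      (γ n).coeff 2 = c ^ 4 * lam ^ (n - 5) * ((n : ℝ) - 4) / ((m : ℝ) ^ 2 * ((m : ℝ) + 2)) *
        (((n : ℝ) + 1) / 2 * (m : ℝ) + ((n : ℝ) - 5)) := by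
  intro n hn
  have hm0 : (m : ℝ) ≠ 0 := Nat.cast_ne_zero.mpr (by omega)
  rw [IsGammaRecursion.coeff_two hγ1 hγ hn, thetaCoeff_one, thetaCoeff_two]
  field_simp
  ring

/-- For every `n ≥ 5`, the coefficient of `x²` in `γ_n` equals
`(c⁴ λ^{n-5} (n-4) / (m² (m+2))) ( ((n+1)/2) m + (n-5) )`. -/
theorem coeff_x_two_gamma (m : ℕ) (hm : 3 ≤ m) (c lam : ℝ) (hc : 0 < c) (hlam : 0 < lam)
    (γ : ℕ → Polynomial ℝ) (hγ1 : γ 1 = 1)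
    (hγ : ∀ n, 2 ≤ n → γ n = thetaPoly m c n +
      C lam * ∑ k ∈ Finset.Icc 1 (n - 1), γ (n - k) * thetaPoly m c k) :
    ∀ n, 5 ≤ n →
      (γ n).coeff 2 = c ^ 4 * lam ^ (n - 5) * ((n : ℝ) - 4) / ((m : ℝ) ^ 2 * ((m : ℝ) + 2)) *
        (((n : ℝ) + 1) / 2 * (m : ℝ) + ((n : ℝ) - 5)) :=
  coeff_x_two_gamma_general m hm c lam γ hγ1 hγ
end

section
/- Fix an integer m ≥ 3 and reals c > 0, λ > 0. For every integer n ≥ 1, the polynomial γ_n has degree at most ⌊(n−1)/2⌋ in the variable x. -/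
open Polynomial

lemma natDegree_thetaPoly_le (m : ℕ) (c : ℝ) (k : ℕ) :
    (thetaPoly m c k).natDegree ≤ (k - 1) / 2 := by
  unfold thetaPoly
  split_ifs with hodd
  · calc (C _ * X ^ (k / 2)).natDegree ≤ k / 2 := natDegree_C_mul_X_pow_le _ _
      _ = (k - 1) / 2 := by omega
  · simp

/-- The bound `natDegree ≤ (k - 1) / 2` is superadditive in the index, so it passes to the
convolution `∑_{k=1}^{n-1} f_{n-k} g_k`. -/
lemma natDegree_convolution_le {R : Type*} [Semiring R] (f g : ℕ → R[X]) (n : ℕ)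
    (hf : ∀ k ∈ Finset.Icc 1 (n - 1), (f (n - k)).natDegree ≤ (n - k - 1) / 2)
    (hg : ∀ k, (g k).natDegree ≤ (k - 1) / 2) :
    (∑ k ∈ Finset.Icc 1 (n - 1), f (n - k) * g k).natDegree ≤ (n - 1) / 2 := by
  refine natDegree_sum_le_of_forall_le _ _ fun k hk => natDegree_mul_le.trans ?_
  have hfk := hf k hk
  have hgk := hg k
  rw [Finset.mem_Icc] at hk
  omega

theorem natDegree_gamma_le_general (m : ℕ) (c lam : ℝ)
    (γ : ℕ → Polynomial ℝ) (hγ1 : γ 1 = 1)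
    (hγ : ∀ n, 2 ≤ n → γ n = thetaPoly m c n +
      C lam * ∑ k ∈ Finset.Icc 1 (n - 1), γ (n - k) * thetaPoly m c k) :
    ∀ n, 1 ≤ n → (γ n).natDegree ≤ (n - 1) / 2 := by
  intro n
  induction n using Nat.strong_induction_on with
  | _ n ih =>
    intro hn
    rcases hn.eq_or_lt with rfl | hn
    · simp [hγ1]
    have hsum := natDegree_convolution_le γ (thetaPoly m c) n
      (fun k hk => ih (n - k) (by rw [Finset.mem_Icc] at hk; omega) (by rw [Finset.mem_Icc] at hk; omega))
      (natDegree_thetaPoly_le m c)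
    rw [hγ n hn]
    exact (natDegree_add_le _ _).trans
      (max_le (natDegree_thetaPoly_le m c n) ((natDegree_C_mul_le _ _).trans hsum))

/-- For every `n ≥ 1`, the polynomial `γ_n` has degree at most `⌊(n-1)/2⌋` in `x`. -/
theorem natDegree_gamma_le (m : ℕ) (hm : 3 ≤ m) (c lam : ℝ) (hc : 0 < c) (hlam : 0 < lam)
    (γ : ℕ → Polynomial ℝ) (hγ1 : γ 1 = 1)
    (hγ : ∀ n, 2 ≤ n → γ n = thetaPoly m c n +
      C lam * ∑ k ∈ Finset.Icc 1 (n - 1), γ (n - k) * thetaPoly m c k) :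
    ∀ n, 1 ≤ n → (γ n).natDegree ≤ (n - 1) / 2 :=
  natDegree_gamma_le_general m c lam γ hγ1 hγ
end

section
/- Let m ≥ 3 be an integer. For every real number x, the series Σ_{k=4}^{∞} (x^k / k!) · [ (m/2)·(k−3)(k+2) + (k−3)(k−4) ] converges, and e^{−x} times its sum equals m·[ e^{−x}(x² + 3x + 3) + x²/2 − 3 ] + (x² + 12)(1 − e^{−x}) − 6x(1 + e^{−x}). -/
/-!
In the falling-factorial basis the coefficient is
`(m/2)(k-3)(k+2) + (k-3)(k-4) = (m/2 + 1) k(k-1) - 6k + (12 - 3m)`, and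
`x^k/k! · k(k-1) = x² x^(k-2)/(k-2)!`, `x^k/k! · k = x x^(k-1)/(k-1)!`. So the series is a
combination of the tails `e^x - Σ_{i<n} x^i/i!` for `n = 2, 3, 4`, and multiplying by `e^{-x}`
turns each `e^x` into `1`.
-/

open Finset Nat

theorem Real.hasSum_pow_div_factorial_add (x : ℝ) (n : ℕ) :
    HasSum (fun j ↦ x ^ (j + n) / (j + n)!) (Real.exp x - ∑ i ∈ range n, x ^ i / i !) := by
  rw [Real.exp_eq_exp_ℝ]
  exact (hasSum_nat_add_iff' n).2 (NormedSpace.expSeries_div_hasSum_exp x)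

theorem pow_succ_div_factorial_succ_mul {𝕜 : Type*} [Field 𝕜] [CharZero 𝕜] (x : 𝕜) (n : ℕ) :
    x ^ (n + 1) / (n + 1)! * (n + 1) = x * (x ^ n / n !) := by
  rw [Nat.factorial_succ, Nat.cast_mul, pow_succ]
  field_simp
  push_cast
  ring

theorem series_sum_combined_general (m : ℕ) (x : ℝ) :
    ∃ S : ℝ,
      HasSum (fun j : ℕ => x ^ (j + 4) / (Nat.factorial (j + 4)) *
          ((m : ℝ) / 2 * ((j : ℝ) + 1) * ((j : ℝ) + 6) + ((j : ℝ) + 1) * (j : ℝ))) S ∧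
      Real.exp (-x) * S =
        (m : ℝ) * (Real.exp (-x) * (x ^ 2 + 3 * x + 3) + x ^ 2 / 2 - 3) +
          (x ^ 2 + 12) * (1 - Real.exp (-x)) - 6 * x * (1 + Real.exp (-x)) := by
  set a : ℝ := m / 2 + 1
  set b : ℝ := 12 - 3 * m
  have hterm (j : ℕ) : x ^ (j + 4) / (j + 4)! *
      ((m : ℝ) / 2 * ((j : ℝ) + 1) * ((j : ℝ) + 6) + ((j : ℝ) + 1) * (j : ℝ)) =
      a * x ^ 2 * (x ^ (j + 2) / (j + 2)!) + -6 * x * (x ^ (j + 3) / (j + 3)!) +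
        b * (x ^ (j + 4) / (j + 4)!) := by
    have h4 := pow_succ_div_factorial_succ_mul x (j + 3)
    have h3 := pow_succ_div_factorial_succ_mul x (j + 2)
    push_cast at h4 h3
    linear_combination (a * ((j : ℝ) + 3) - 6) * h4 + a * x * h3
  have hsum := (((Real.hasSum_pow_div_factorial_add x 2).mul_left (a * x ^ 2)).add
    ((Real.hasSum_pow_div_factorial_add x 3).mul_left (-6 * x))).add
    ((Real.hasSum_pow_div_factorial_add x 4).mul_left b)
  refine ⟨_, hsum.congr_fun hterm, ?_⟩
  have hexp : Real.exp (-x) * Real.exp x = 1 := by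
    rw [← Real.exp_add, neg_add_cancel, Real.exp_zero]
  simp only [sum_range_succ, sum_range_zero, factorial]
  push_cast
  linear_combination (a * x ^ 2 - 6 * x + b) * hexp

/-- Let `m ≥ 3`. For every real `x`, the series
`Σ_{k=4}^∞ (x^k / k!) [ (m/2)(k-3)(k+2) + (k-3)(k-4) ]` converges, and `e^{-x}` times its sum
equals `m [ e^{-x}(x² + 3x + 3) + x²/2 - 3 ] + (x² + 12)(1 - e^{-x}) - 6x(1 + e^{-x})`.
(The series is indexed by `k = j + 4`, `j ∈ ℕ`.) -/
theorem series_sum_combined (m : ℕ) (hm : 3 ≤ m) (x : ℝ) :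
    ∃ S : ℝ,
      HasSum (fun j : ℕ => x ^ (j + 4) / (Nat.factorial (j + 4)) *
          ((m : ℝ) / 2 * ((j : ℝ) + 1) * ((j : ℝ) + 6) + ((j : ℝ) + 1) * (j : ℝ))) S ∧
      Real.exp (-x) * S =
        (m : ℝ) * (Real.exp (-x) * (x ^ 2 + 3 * x + 3) + x ^ 2 / 2 - 3) +
          (x ^ 2 + 12) * (1 - Real.exp (-x)) - 6 * x * (1 + Real.exp (-x)) :=
  series_sum_combined_general m x
end
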